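/- Let M be a nonnegative σ-finite measure on (0,1] with ∫ u M(du) < ∞, and let (ν_θ)_{θ>0} be a family of probability measures on [0,∞) with all moments finite such that ∫ x^n ν_θ(dx) = R_n θ^n for all n ∈ ℕ and θ > 0, where R₀ = 1 and R_n ∈ (0,∞). Then the following are equivalent: (i) for all n ∈ ℕ and all θ, θ* > 0, ∫₀^∞ [ ∫ M(du)(((1−u)x)^n − x^n) + ∫₀^∞ ν_{θ*}(dy) ∫ M(du)((x + u y)^n − x^n) ] ν_θ(dx) = R_n ∫ M(du)( ((1−u)θ + u θ*)^n − θ^n ), with all integrals converging absolutely; (ii) for all n ∈ ℕ and all k with 1 ≤ k ≤ n, R_{n−k} R_k ∫ u^k M(du) = R_n ∫ u^k (1−u)^{n−k} M(du). (This is the criterion for the boundary generator of the general mass-redistribution model with redistribution measure M to be intertwined, via the kernel 𝒢f(θ) = ∫ f dν_θ, with the hidden-parameter boundary generator 𝓛_{θ*}f(θ) = ∫ M(du)(f((1−u)θ + uθ*) − f(θ)).) -/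
import Mathlib


open MeasureTheory Real Set

/-- Binomial tail expansion. -/
lemma mri_binom_tail (a b : ℝ) (n : ℕ) :
    (a + b) ^ n - a ^ n
      = ∑ k ∈ Finset.Icc 1 n, a ^ (n - k) * b ^ k * (n.choose k : ℝ) := by
  have h := add_pow b a n
  rw [add_comm] at h
  rw [h, Finset.sum_range_succ' (fun m => b ^ m * a ^ (n - m) * (n.choose m : ℝ)) n]
  simp only [pow_zero, Nat.choose_zero_right, Nat.cast_one, one_mul, mul_one, Nat.sub_zero]
  have : ∑ k ∈ Finset.Icc 1 n, a ^ (n - k) * b ^ k * (n.choose k : ℝ)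
      = ∑ k ∈ Finset.range n, a ^ (n - (1 + k)) * b ^ (1 + k) * (n.choose (1 + k) : ℝ) := by
    rw [← Finset.Ico_add_one_right_eq_Icc, Finset.sum_Ico_eq_sum_range]
    simp
  rw [this]
  have h2 : ∀ k ∈ Finset.range n,
      b ^ (k + 1) * a ^ (n - (k + 1)) * (n.choose (k + 1) : ℝ)
        = a ^ (n - (1 + k)) * b ^ (1 + k) * (n.choose (1 + k) : ℝ) := by
    intro k _
    rw [add_comm 1 k]
    ring
  rw [Finset.sum_congr rfl h2]
  ring

lemma mri_ae_mem (M : Measure ℝ) (hMsupp : M (Set.Ioc (0 : ℝ) 1)ᶜ = 0) :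
    ∀ᵐ u ∂M, u ∈ Set.Ioc (0 : ℝ) 1 := by
  rw [ae_iff]
  exact hMsupp

lemma mri_int_id (M : Measure ℝ) (hMsupp : M (Set.Ioc (0 : ℝ) 1)ᶜ = 0)
    (hMmom : ∫⁻ u, ENNReal.ofReal u ∂M < ⊤) :
    Integrable (fun u : ℝ => u) M := by
  refine ⟨measurable_id.aestronglyMeasurable, ?_⟩
  have hc : ∀ᵐ u ∂M, (‖u‖₊ : ENNReal) = ENNReal.ofReal u :=
    (mri_ae_mem M hMsupp).mono fun u hu => Real.enorm_eq_ofReal hu.1.le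
  show (∫⁻ u, (‖u‖₊ : ENNReal) ∂M) < ⊤
  rwa [lintegral_congr_ae hc]

lemma mri_int_bnd (M : Measure ℝ) (hMsupp : M (Set.Ioc (0 : ℝ) 1)ᶜ = 0)
    (hMmom : ∫⁻ u, ENNReal.ofReal u ∂M < ⊤) {g : ℝ → ℝ}
    (hg : AEStronglyMeasurable g M) {C : ℝ}
    (hb : ∀ u ∈ Set.Ioc (0 : ℝ) 1, ‖g u‖ ≤ C * u) : Integrable g M :=
  Integrable.mono' ((mri_int_id M hMsupp hMmom).const_mul C) hg
    ((mri_ae_mem M hMsupp).mono fun u hu => hb u hu)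

lemma mri_int_pow (M : Measure ℝ) (hMsupp : M (Set.Ioc (0 : ℝ) 1)ᶜ = 0)
    (hMmom : ∫⁻ u, ENNReal.ofReal u ∂M < ⊤) {k : ℕ} (hk : 1 ≤ k) :
    Integrable (fun u : ℝ => u ^ k) M := by
  refine mri_int_bnd M hMsupp hMmom
    ((measurable_id.pow_const k).aestronglyMeasurable) (C := 1) fun u hu => ?_
  have h1 : ‖u ^ k‖ = u ^ k := by
    rw [Real.norm_eq_abs, abs_pow, abs_of_pos hu.1]
  rw [h1, one_mul]
  calc u ^ k ≤ u ^ 1 := pow_le_pow_of_le_one hu.1.le hu.2 hk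
    _ = u := pow_one u

lemma mri_int_J (M : Measure ℝ) (hMsupp : M (Set.Ioc (0 : ℝ) 1)ᶜ = 0)
    (hMmom : ∫⁻ u, ENNReal.ofReal u ∂M < ⊤) {k : ℕ} (hk : 1 ≤ k) (m : ℕ) :
    Integrable (fun u : ℝ => u ^ k * (1 - u) ^ m) M := by
  refine mri_int_bnd M hMsupp hMmom ?_ (C := 1) fun u hu => ?_
  · exact ((measurable_id.pow_const k).mul
      ((measurable_const.sub measurable_id).pow_const m)).aestronglyMeasurable
  · have h0 : 0 ≤ 1 - u := by linarith [hu.2]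
    have h1 : ‖u ^ k * (1 - u) ^ m‖ = u ^ k * (1 - u) ^ m := by
      rw [Real.norm_eq_abs, abs_of_nonneg (mul_nonneg (pow_nonneg hu.1.le k)
        (pow_nonneg h0 m))]
    rw [h1, one_mul]
    calc u ^ k * (1 - u) ^ m ≤ u ^ k * 1 :=
          mul_le_mul_of_nonneg_left (pow_le_one₀ h0 (by linarith [hu.1])) (pow_nonneg hu.1.le k)
      _ = u ^ k := mul_one _
      _ ≤ u ^ 1 := pow_le_pow_of_le_one hu.1.le hu.2 hk
      _ = u := pow_one u

lemma mri_int_A (M : Measure ℝ) (hMsupp : M (Set.Ioc (0 : ℝ) 1)ᶜ = 0)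
    (hMmom : ∫⁻ u, ENNReal.ofReal u ∂M < ⊤) (n : ℕ) :
    Integrable (fun u : ℝ => (1 - u) ^ n - 1) M := by
  refine mri_int_bnd M hMsupp hMmom ?_ (C := (n : ℝ)) fun u hu => ?_
  · exact (((measurable_const.sub measurable_id).pow_const n).sub
      measurable_const).aestronglyMeasurable
  · have h0 : 0 ≤ 1 - u := by linarith [hu.2]
    have hle1 : (1 - u) ^ n ≤ 1 := pow_le_one₀ h0 (by linarith [hu.1])
    have hber : 1 + (n : ℝ) * (-u) ≤ (1 + (-u)) ^ n :=
      one_add_mul_le_pow (by linarith [hu.2]) n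
    have h1 : ‖(1 - u) ^ n - 1‖ = 1 - (1 - u) ^ n := by
      rw [Real.norm_eq_abs, abs_sub_comm, abs_of_nonneg (by linarith)]
    rw [h1]
    have : (1 : ℝ) + (n : ℝ) * (-u) = 1 - (n : ℝ) * u := by ring
    rw [this] at hber
    have h2 : (1 : ℝ) + (-u) = 1 - u := by ring
    rw [h2] at hber
    linarith

/-- Coefficient extraction for polynomials vanishing on the positive reals. -/
lemma mri_coeffs_zero {n : ℕ} (c : ℕ → ℝ)
    (h : ∀ t : ℝ, 0 < t → ∑ k ∈ Finset.Icc 1 n, c k * t ^ k = 0) :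
    ∀ k ∈ Finset.Icc 1 n, c k = 0 := by
  set p : Polynomial ℝ := ∑ k ∈ Finset.Icc 1 n, Polynomial.C (c k) * Polynomial.X ^ k with hp
  have hroot : ∀ t : ℝ, 0 < t → p.IsRoot t := by
    intro t ht
    have : p.eval t = ∑ k ∈ Finset.Icc 1 n, c k * t ^ k := by
      rw [hp, Polynomial.eval_finset_sum]
      simp
    simpa [Polynomial.IsRoot, this] using h t ht
  have hp0 : p = 0 :=
    Polynomial.eq_zero_of_infinite_isRoot p
      ((Set.Ioi_infinite (0 : ℝ)).mono fun t ht => hroot t ht)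
  intro k hk
  have hcoeff : p.coeff k = c k := by
    rw [hp, Polynomial.finset_sum_coeff]
    have : ∀ j ∈ Finset.Icc 1 n,
        (Polynomial.C (c j) * Polynomial.X ^ j).coeff k
          = if k = j then c j else 0 := by
      intro j _
      rw [Polynomial.coeff_C_mul, Polynomial.coeff_X_pow]
      by_cases hjk : k = j <;> simp [hjk]
    rw [Finset.sum_congr rfl this, Finset.sum_ite_eq _ k (fun j => c j), if_pos hk]
  rw [← hcoeff, hp0]
  simp

lemma mri_intA_eq (M : Measure ℝ) (n : ℕ) (x : ℝ) :
    ∫ u, (((1 - u) * x) ^ n - x ^ n) ∂M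
      = (∫ u, ((1 - u) ^ n - 1) ∂M) * x ^ n := by
  have hpt : ∀ u : ℝ, ((1 - u) * x) ^ n - x ^ n = ((1 - u) ^ n - 1) * x ^ n := fun u => by
    rw [mul_pow]; ring
  simp_rw [hpt]
  exact integral_mul_const (x ^ n) _

lemma mri_intB_eq (M : Measure ℝ) (hMsupp : M (Set.Ioc (0 : ℝ) 1)ᶜ = 0)
    (hMmom : ∫⁻ u, ENNReal.ofReal u ∂M < ⊤) (n : ℕ) (x y : ℝ) :
    ∫ u, ((x + u * y) ^ n - x ^ n) ∂M
      = ∑ k ∈ Finset.Icc 1 n,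
          ((n.choose k : ℝ) * x ^ (n - k) * (∫ u, u ^ k ∂M)) * y ^ k := by
  have hpt : ∀ u : ℝ, (x + u * y) ^ n - x ^ n
      = ∑ k ∈ Finset.Icc 1 n, u ^ k * ((n.choose k : ℝ) * x ^ (n - k) * y ^ k) := by
    intro u
    rw [mri_binom_tail x (u * y) n]
    exact Finset.sum_congr rfl fun k _ => by rw [mul_pow]; ring
  simp_rw [hpt]
  rw [integral_finset_sum _ (fun k hk =>
    (mri_int_pow M hMsupp hMmom (Finset.mem_Icc.1 hk).1).mul_const _)]
  refine Finset.sum_congr rfl fun k _ => ?_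
  rw [integral_mul_const]
  ring

lemma mri_intD_eq (M : Measure ℝ) (hMsupp : M (Set.Ioc (0 : ℝ) 1)ᶜ = 0)
    (hMmom : ∫⁻ u, ENNReal.ofReal u ∂M < ⊤) (n : ℕ) (a b : ℝ) :
    ∫ u, (((1 - u) * a + u * b) ^ n - a ^ n) ∂M
      = (∫ u, ((1 - u) ^ n - 1) ∂M) * a ^ n
        + ∑ k ∈ Finset.Icc 1 n,
            (∫ u, u ^ k * (1 - u) ^ (n - k) ∂M)
              * ((n.choose k : ℝ) * a ^ (n - k) * b ^ k) := by
  have hpt : ∀ u : ℝ, ((1 - u) * a + u * b) ^ n - a ^ n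
      = ((1 - u) ^ n - 1) * a ^ n
        + ∑ k ∈ Finset.Icc 1 n,
            (u ^ k * (1 - u) ^ (n - k)) * ((n.choose k : ℝ) * a ^ (n - k) * b ^ k) := by
    intro u
    have key := mri_binom_tail ((1 - u) * a) (u * b) n
    have hsplit : ((1 - u) * a + u * b) ^ n - a ^ n
        = (((1 - u) * a + u * b) ^ n - ((1 - u) * a) ^ n) + (((1 - u) * a) ^ n - a ^ n) := by
      ring
    rw [hsplit, key, mul_pow (1 - u) a n]
    have hsum : ∑ k ∈ Finset.Icc 1 n, ((1 - u) * a) ^ (n - k) * (u * b) ^ k * (n.choose k : ℝ)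
        = ∑ k ∈ Finset.Icc 1 n,
            (u ^ k * (1 - u) ^ (n - k)) * ((n.choose k : ℝ) * a ^ (n - k) * b ^ k) :=
      Finset.sum_congr rfl fun k _ => by rw [mul_pow (1 - u) a, mul_pow u b]; ring
    rw [hsum]
    ring
  simp_rw [hpt]
  rw [integral_add ((mri_int_A M hMsupp hMmom n).mul_const _)
    (integrable_finset_sum _ (fun k hk =>
      (mri_int_J M hMsupp hMmom (Finset.mem_Icc.1 hk).1 (n - k)).mul_const _))]
  rw [integral_mul_const, integral_finset_sum _ (fun k hk =>
    (mri_int_J M hMsupp hMmom (Finset.mem_Icc.1 hk).1 (n - k)).mul_const _)]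
  refine congrArg _ (Finset.sum_congr rfl fun k _ => ?_)
  rw [integral_mul_const]

/-- Criterion for the boundary generator of the general mass-redistribution model with
redistribution measure `M` to be intertwined, via the kernel `𝒢f(θ) = ∫ f dν_θ`, with the
hidden-parameter boundary generator: the intertwining on all monomials `x^n` (i) holds iff
the moment relations (ii) hold. -/
theorem mass_redistribution_intertwining_criterion
    (M : Measure ℝ) [SigmaFinite M] (hMsupp : M (Set.Ioc (0 : ℝ) 1)ᶜ = 0)
    (hMmom : ∫⁻ u, ENNReal.ofReal u ∂M < ⊤)
    (ν : ℝ → Measure ℝ) (hνprob : ∀ θ : ℝ, 0 < θ → IsProbabilityMeasure (ν θ))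
    (hνsupp : ∀ θ : ℝ, 0 < θ → ν θ (Set.Iio 0) = 0)
    (R : ℕ → ℝ) (hR0 : R 0 = 1) (hRpos : ∀ n, 0 < R n)
    (hνmom : ∀ (n : ℕ) (θ : ℝ), 0 < θ →
      Integrable (fun x : ℝ => x ^ n) (ν θ) ∧ (∫ x, x ^ n ∂(ν θ)) = R n * θ ^ n) :
    (∀ (n : ℕ) (θ θs : ℝ), 0 < θ → 0 < θs →
      ((∀ x : ℝ, 0 ≤ x →
          Integrable (fun u : ℝ => ((1 - u) * x) ^ n - x ^ n) M) ∧
       (∀ x : ℝ, 0 ≤ x → ∀ y : ℝ, 0 ≤ y →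
          Integrable (fun u : ℝ => (x + u * y) ^ n - x ^ n) M) ∧
       (∀ x : ℝ, 0 ≤ x →
          Integrable (fun y : ℝ => ∫ u, ((x + u * y) ^ n - x ^ n) ∂M) (ν θs)) ∧
       Integrable (fun x : ℝ =>
          (∫ u, (((1 - u) * x) ^ n - x ^ n) ∂M) +
            ∫ y, (∫ u, ((x + u * y) ^ n - x ^ n) ∂M) ∂(ν θs)) (ν θ) ∧
       Integrable (fun u : ℝ => ((1 - u) * θ + u * θs) ^ n - θ ^ n) M ∧
       (∫ x, ((∫ u, (((1 - u) * x) ^ n - x ^ n) ∂M) +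
            ∫ y, (∫ u, ((x + u * y) ^ n - x ^ n) ∂M) ∂(ν θs)) ∂(ν θ))
         = R n * ∫ u, (((1 - u) * θ + u * θs) ^ n - θ ^ n) ∂M))
    ↔
    (∀ (n k : ℕ), 1 ≤ k → k ≤ n →
      R (n - k) * R k * (∫ u, u ^ k ∂M)
        = R n * ∫ u, (u ^ k * (1 - u) ^ (n - k)) ∂M) := by
  -- abbreviations
  set A : ℕ → ℝ := fun n => ∫ u, ((1 - u) ^ n - 1) ∂M with hA
  set I : ℕ → ℝ := fun k => ∫ u, u ^ k ∂M with hI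
  set J : ℕ → ℕ → ℝ := fun n k => ∫ u, u ^ k * (1 - u) ^ (n - k) ∂M with hJ
  -- the inner y-integral
  have hintC : ∀ (n : ℕ) (θs : ℝ), 0 < θs → ∀ x : ℝ,
      (∫ y, (∫ u, ((x + u * y) ^ n - x ^ n) ∂M) ∂(ν θs))
        = ∑ k ∈ Finset.Icc 1 n,
            ((n.choose k : ℝ) * I k * (R k * θs ^ k)) * x ^ (n - k) := by
    intro n θs hθs x
    have h1 : (fun y : ℝ => ∫ u, ((x + u * y) ^ n - x ^ n) ∂M)
        = fun y : ℝ => ∑ k ∈ Finset.Icc 1 n,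
            ((n.choose k : ℝ) * x ^ (n - k) * I k) * y ^ k :=
      funext fun y => mri_intB_eq M hMsupp hMmom n x y
    rw [h1, integral_finset_sum _ (fun k hk => ((hνmom k θs hθs).1.const_mul _))]
    refine Finset.sum_congr rfl fun k _ => ?_
    rw [integral_const_mul, (hνmom k θs hθs).2]
    ring
  -- the full LHS integrand as a function of x
  have hFun : ∀ (n : ℕ) (θs : ℝ), 0 < θs →
      (fun x : ℝ => (∫ u, (((1 - u) * x) ^ n - x ^ n) ∂M) +
          ∫ y, (∫ u, ((x + u * y) ^ n - x ^ n) ∂M) ∂(ν θs))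
        = fun x : ℝ => A n * x ^ n + ∑ k ∈ Finset.Icc 1 n,
            ((n.choose k : ℝ) * I k * (R k * θs ^ k)) * x ^ (n - k) := by
    intro n θs hθs
    funext x
    rw [mri_intA_eq M n x, hintC n θs hθs x]
  -- integrability of the full LHS integrand
  have hFint : ∀ (n : ℕ) (θ θs : ℝ), 0 < θ → 0 < θs →
      Integrable (fun x : ℝ => (∫ u, (((1 - u) * x) ^ n - x ^ n) ∂M) +
          ∫ y, (∫ u, ((x + u * y) ^ n - x ^ n) ∂M) ∂(ν θs)) (ν θ) := by
    intro n θ θs hθ hθs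
    rw [hFun n θs hθs]
    exact ((hνmom n θ hθ).1.const_mul _).add
      (integrable_finset_sum _ fun k hk => ((hνmom (n - k) θ hθ).1.const_mul _))
  -- value of the LHS integral
  have hLHS : ∀ (n : ℕ) (θ θs : ℝ), 0 < θ → 0 < θs →
      (∫ x, ((∫ u, (((1 - u) * x) ^ n - x ^ n) ∂M) +
          ∫ y, (∫ u, ((x + u * y) ^ n - x ^ n) ∂M) ∂(ν θs)) ∂(ν θ))
        = A n * (R n * θ ^ n) + ∑ k ∈ Finset.Icc 1 n,
            (n.choose k : ℝ) * (R (n - k) * R k * I k) * (θ ^ (n - k) * θs ^ k) := by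
    intro n θ θs hθ hθs
    rw [hFun n θs hθs,
      integral_add ((hνmom n θ hθ).1.const_mul _)
        (integrable_finset_sum _ fun k hk => ((hνmom (n - k) θ hθ).1.const_mul _)),
      integral_const_mul, (hνmom n θ hθ).2,
      integral_finset_sum _ (fun k hk => ((hνmom (n - k) θ hθ).1.const_mul _))]
    refine congrArg _ (Finset.sum_congr rfl fun k _ => ?_)
    rw [integral_const_mul, (hνmom (n - k) θ hθ).2]
    ring
  -- value of the RHS
  have hRHS : ∀ (n : ℕ) (θ θs : ℝ),
      R n * (∫ u, (((1 - u) * θ + u * θs) ^ n - θ ^ n) ∂M)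
        = A n * (R n * θ ^ n) + ∑ k ∈ Finset.Icc 1 n,
            (n.choose k : ℝ) * (R n * J n k) * (θ ^ (n - k) * θs ^ k) := by
    intro n θ θs
    rw [mri_intD_eq M hMsupp hMmom n θ θs, mul_add, Finset.mul_sum]
    refine congrArg₂ _ (by ring) (Finset.sum_congr rfl fun k _ => ?_)
    show R n * (J n k * ((n.choose k : ℝ) * θ ^ (n - k) * θs ^ k)) = _
    ring
  -- the clean equivalence of the equality part
  have hkey : ∀ (n : ℕ) (θ θs : ℝ), 0 < θ → 0 < θs →
      (((∫ x, ((∫ u, (((1 - u) * x) ^ n - x ^ n) ∂M) +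
            ∫ y, (∫ u, ((x + u * y) ^ n - x ^ n) ∂M) ∂(ν θs)) ∂(ν θ))
         = R n * ∫ u, (((1 - u) * θ + u * θs) ^ n - θ ^ n) ∂M)
        ↔ (∑ k ∈ Finset.Icc 1 n,
            (n.choose k : ℝ) * (R (n - k) * R k * I k - R n * J n k)
              * (θ ^ (n - k) * θs ^ k) = 0)) := by
    intro n θ θs hθ hθs
    rw [hLHS n θ θs hθ hθs, hRHS n θ θs, add_right_inj]
    have hdist : ∑ k ∈ Finset.Icc 1 n,
        (n.choose k : ℝ) * (R (n - k) * R k * I k - R n * J n k) * (θ ^ (n - k) * θs ^ k)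
      = (∑ k ∈ Finset.Icc 1 n,
          (n.choose k : ℝ) * (R (n - k) * R k * I k) * (θ ^ (n - k) * θs ^ k))
        - ∑ k ∈ Finset.Icc 1 n,
            (n.choose k : ℝ) * (R n * J n k) * (θ ^ (n - k) * θs ^ k) := by
      rw [← Finset.sum_sub_distrib]
      exact Finset.sum_congr rfl fun k _ => by ring
    rw [hdist, sub_eq_zero]
  constructor
  · -- (i) → (ii)
    intro h n k hk1 hkn
    have hc : ∀ t : ℝ, 0 < t → ∑ j ∈ Finset.Icc 1 n,
        ((n.choose j : ℝ) * (R (n - j) * R j * I j - R n * J n j)) * t ^ j = 0 := by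
      intro t ht
      have h6 := (h n 1 t one_pos ht).2.2.2.2.2
      have := (hkey n 1 t one_pos ht).1 h6
      rw [← this]
      exact Finset.sum_congr rfl fun j _ => by rw [one_pow]; ring
    have hz := mri_coeffs_zero _ hc k (Finset.mem_Icc.2 ⟨hk1, hkn⟩)
    have hC : (n.choose k : ℝ) ≠ 0 := by
      have := Nat.choose_pos hkn
      positivity
    have : R (n - k) * R k * I k - R n * J n k = 0 := by
      rcases mul_eq_zero.1 hz with h' | h'
      · exact absurd h' hC
      · exact h'
    have := sub_eq_zero.1 this
    simpa [hI, hJ] using this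
  · -- (ii) → (i)
    intro h n θ θs hθ hθs
    haveI := hνprob θ hθ
    haveI := hνprob θs hθs
    refine ⟨?_, ?_, ?_, hFint n θ θs hθ hθs, ?_, ?_⟩
    · intro x _
      have h1 : (fun u : ℝ => ((1 - u) * x) ^ n - x ^ n)
          = fun u : ℝ => ((1 - u) ^ n - 1) * x ^ n :=
        funext fun u => by rw [mul_pow]; ring
      rw [h1]
      exact (mri_int_A M hMsupp hMmom n).mul_const _
    · intro x _ y _
      have h1 : (fun u : ℝ => (x + u * y) ^ n - x ^ n)
          = fun u : ℝ => ∑ k ∈ Finset.Icc 1 n,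
              u ^ k * ((n.choose k : ℝ) * x ^ (n - k) * y ^ k) := by
        funext u
        rw [mri_binom_tail x (u * y) n]
        exact Finset.sum_congr rfl fun k _ => by rw [mul_pow]; ring
      rw [h1]
      exact integrable_finset_sum _ fun k hk =>
        (mri_int_pow M hMsupp hMmom (Finset.mem_Icc.1 hk).1).mul_const _
    · intro x _
      have h1 : (fun y : ℝ => ∫ u, ((x + u * y) ^ n - x ^ n) ∂M)
          = fun y : ℝ => ∑ k ∈ Finset.Icc 1 n,
              ((n.choose k : ℝ) * x ^ (n - k) * I k) * y ^ k :=
        funext fun y => mri_intB_eq M hMsupp hMmom n x y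
      rw [h1]
      exact integrable_finset_sum _ fun k hk => ((hνmom k θs hθs).1.const_mul _)
    · have h1 : (fun u : ℝ => ((1 - u) * θ + u * θs) ^ n - θ ^ n)
          = fun u : ℝ => ((1 - u) ^ n - 1) * θ ^ n
              + ∑ k ∈ Finset.Icc 1 n,
                  (u ^ k * (1 - u) ^ (n - k)) * ((n.choose k : ℝ) * θ ^ (n - k) * θs ^ k) := by
        funext u
        have key := mri_binom_tail ((1 - u) * θ) (u * θs) n
        have hsplit : ((1 - u) * θ + u * θs) ^ n - θ ^ n
            = (((1 - u) * θ + u * θs) ^ n - ((1 - u) * θ) ^ n)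
              + (((1 - u) * θ) ^ n - θ ^ n) := by ring
        rw [hsplit, key, mul_pow (1 - u) θ n]
        have hsum : ∑ k ∈ Finset.Icc 1 n,
            ((1 - u) * θ) ^ (n - k) * (u * θs) ^ k * (n.choose k : ℝ)
            = ∑ k ∈ Finset.Icc 1 n,
                (u ^ k * (1 - u) ^ (n - k)) * ((n.choose k : ℝ) * θ ^ (n - k) * θs ^ k) :=
          Finset.sum_congr rfl fun k _ => by rw [mul_pow (1 - u) θ, mul_pow u θs]; ring
        rw [hsum]
        ring
      rw [h1]
      exact ((mri_int_A M hMsupp hMmom n).mul_const _).add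
        (integrable_finset_sum _ fun k hk =>
          (mri_int_J M hMsupp hMmom (Finset.mem_Icc.1 hk).1 (n - k)).mul_const _)
    · rw [hkey n θ θs hθ hθs]
      refine Finset.sum_eq_zero fun k hk => ?_
      have hm := Finset.mem_Icc.1 hk
      have hik : R (n - k) * R k * I k = R n * J n k := by
        simpa [hI, hJ] using h n k hm.1 hm.2
      rw [hik, sub_self, mul_zero, zero_mul]
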